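/- The function V(r) = r·coth(r) − log(sinh(r)) − log 2 is integrable on (0, ∞); that is, the constant a := ∫_0^∞ V(r) dr is finite. -/

import Mathlib

open MeasureTheory Filter Set
open scoped ENNReal NNReal Topology

noncomputable section

/-- `IsP2 μ` : `μ` is a Borel probability measure on `ℝ` with finite second moment. -/
def IsP2 (μ : Measure ℝ) : Prop :=
  IsProbabilityMeasure μ ∧ Integrable (fun x => x ^ 2) μ

/-- The space `P₂(ℝ)` of Borel probability measures on `ℝ` with finite second moment. -/
abbrev P2 : Type := {μ : Measure ℝ // IsP2 μ}

/-- `π` is a coupling of `μ` and `ν`. -/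
def IsCoupling (π : Measure (ℝ × ℝ)) (μ ν : Measure ℝ) : Prop :=
  π.map Prod.fst = μ ∧ π.map Prod.snd = ν

/-- The Wasserstein-2 distance on `P₂(ℝ)`. -/
noncomputable def W2 (μ ν : P2) : ℝ :=
  Real.sqrt (ENNReal.toReal (sInf {c : ℝ≥0∞ | ∃ π : Measure (ℝ × ℝ),
    IsCoupling π μ.1 ν.1 ∧ c = ∫⁻ p, ENNReal.ofReal ((p.1 - p.2) ^ 2) ∂π}))

/-- Narrow convergence of a sequence of measures: testing against bounded continuous
functions. -/
def NarrowTendsto (μs : ℕ → Measure ℝ) (μ : Measure ℝ) : Prop :=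
  ∀ f : BoundedContinuousFunction ℝ ℝ,
    Tendsto (fun n => ∫ x, f x ∂(μs n)) atTop (𝓝 (∫ x, f x ∂μ))

/-- Upper Dini derivative (as an extended real number). -/
noncomputable def diniUpper (f : ℝ → ℝ) (t : ℝ) : EReal :=
  limsup (fun h : ℝ => (((f (t + h) - f t) / h : ℝ) : EReal)) (𝓝[>] (0 : ℝ))

/-- Local absolute continuity of a curve in `(P₂(ℝ), W₂)` on `(0, ∞)`. -/
def LocACCurve (u : ℝ → P2) : Prop :=
  ∀ a b : ℝ, 0 < a → a ≤ b → ∃ m : ℝ → ℝ,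
    IntegrableOn m (Icc a b) ∧
    ∀ s t : ℝ, a ≤ s → s ≤ t → t ≤ b → W2 (u s) (u t) ≤ ∫ r in Icc s t, m r

/-- The (effective) domain of a functional on `P₂(ℝ)` with values in `(-∞, ∞]`. -/
def EDom (φ : P2 → EReal) : Set P2 := {μ | φ μ ≠ ⊤}

/-- `u` is a solution of the evolution variational inequality (EVI) for the functional `φ`
with initial datum `u₀`:  it is a locally absolutely continuous curve with
`(1/2) d/dt W₂²(u_t, ν) ≤ φ(ν) − φ(u_t)` for all `t > 0` and all `ν ∈ Dom φ`, and
`W₂(u_t, u₀) → 0` as `t ↓ 0`. -/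
def IsEVISolution (φ : P2 → EReal) (u : ℝ → P2) (u₀ : P2) : Prop :=
  u 0 = u₀ ∧ LocACCurve u ∧
  (∀ t : ℝ, 0 < t → ∀ ν ∈ EDom φ,
    (((1 : ℝ)/2 : ℝ) : EReal) * diniUpper (fun s => (W2 (u s) ν) ^ 2) t ≤ φ ν - φ (u t)) ∧
  Tendsto (fun t => W2 (u t) u₀) (𝓝[>] (0 : ℝ)) (𝓝 0)

/-- A functional is proper if it is not identically `+∞`. -/
def ProperFn (φ : P2 → EReal) : Prop := ∃ μ : P2, φ μ ≠ ⊤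

/-- Bounded from below (in particular the value `-∞` is never attained). -/
def BddBelowFn (φ : P2 → EReal) : Prop := ∃ C : ℝ, ∀ μ : P2, (C : EReal) ≤ φ μ

/-- (Sequential) lower semicontinuity with respect to the Wasserstein-2 distance. -/
def W2LSC (φ : P2 → EReal) : Prop :=
  ∀ (μs : ℕ → P2) (μ : P2), Tendsto (fun n => W2 (μs n) μ) atTop (𝓝 0) →
    φ μ ≤ liminf (fun n => φ (μs n)) atTop

/-- (Sequential) lower semicontinuity with respect to narrow convergence. -/
def NarrowLSC (φ : P2 → EReal) : Prop :=
  ∀ (μs : ℕ → P2) (μ : P2), NarrowTendsto (fun n => (μs n).1) μ.1 →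
    φ μ ≤ liminf (fun n => φ (μs n)) atTop

/-- Geodesic convexity: convexity along every constant-speed `W₂`-geodesic. -/
def GeodConvex (φ : P2 → EReal) : Prop :=
  ∀ γ : ℝ → P2,
    (∀ s t : ℝ, s ∈ Icc (0:ℝ) 1 → t ∈ Icc (0:ℝ) 1 →
        W2 (γ s) (γ t) = |s - t| * W2 (γ 0) (γ 1)) →
    ∀ t : ℝ, t ∈ Icc (0:ℝ) 1 →
      φ (γ t) ≤ (((1 - t : ℝ)) : EReal) * φ (γ 0) + ((t : ℝ) : EReal) * φ (γ 1)

/-- Membership in the `W₂`-closure of a set of measures. -/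
def InW2Closure (S : Set P2) (μ : P2) : Prop :=
  ∃ νs : ℕ → P2, (∀ k, νs k ∈ S) ∧ Tendsto (fun k => W2 (νs k) μ) atTop (𝓝 0)

/-- The interaction potential `V(r) = r coth r − log(sinh r) − log 2`. -/
noncomputable def V (r : ℝ) : ℝ :=
  r * (Real.cosh r / Real.sinh r) - Real.log |Real.sinh r| - Real.log 2

/-! For `r > 0`, `V r = r e^{-r} / sinh r - log (1 - e^{-2r})`, a sum of two nonnegative terms.
The first is at most `e^{-r}` because `sinh r ≥ r`. The second is `h (2r)` with
`h t = -log (1 - e^{-t})`, which is at most `t - log t` (as `1 - e^{-t} ≥ t e^{-t}`), integrable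
near `0`, and at most `2 e^{-t}` for `t ≥ 1`. -/

open Real

lemma neg_log_one_sub_exp_neg_nonneg {t : ℝ} (ht : 0 ≤ t) : 0 ≤ -log (1 - exp (-t)) :=
  neg_nonneg.2 <| log_nonpos (sub_nonneg.2 <| exp_le_one_iff.2 (neg_nonpos.2 ht))
    (sub_le_self _ (exp_pos _).le)

lemma neg_log_one_sub_exp_neg_le_sub_log {t : ℝ} (ht : 0 < t) :
    -log (1 - exp (-t)) ≤ t - log t := by
  have hlower : t * exp (-t) ≤ 1 - exp (-t) := by
    have hexp := add_one_le_exp t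
    have hprod : exp t * exp (-t) = 1 := by rw [← exp_add, add_neg_cancel, exp_zero]
    nlinarith [exp_pos (-t)]
  have := log_le_log (by positivity) hlower
  rw [log_mul ht.ne' (exp_pos _).ne', log_exp] at this
  linarith

lemma neg_log_one_sub_exp_neg_le_two_mul_exp_neg {t : ℝ} (ht : 1 ≤ t) :
    -log (1 - exp (-t)) ≤ 2 * exp (-t) := by
  set x := exp (-t)
  have hx : x ≤ 1 / 2 := by
    have h2e : 2 ≤ exp 1 := by linarith [add_one_le_exp (1 : ℝ)]
    have : x * exp 1 ≤ 1 := by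
      rw [← exp_add, exp_le_one_iff]; linarith
    nlinarith [exp_pos (-t)]
  have hlog := one_sub_inv_le_log_of_pos (by linarith : 0 < 1 - x)
  have hinv : (1 - x)⁻¹ ≤ 1 + 2 * x := by
    rw [inv_le_iff_one_le_mul₀ (by linarith)]
    nlinarith [exp_pos (-t)]
  linarith

lemma integrableOn_neg_log_one_sub_exp_neg :
    IntegrableOn (fun t => -log (1 - exp (-t))) (Ioi 0) := by
  have hmeas : AEStronglyMeasurable (fun t => -log (1 - exp (-t))) volume :=
    (measurable_log.comp (by fun_prop)).neg.aestronglyMeasurable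
  rw [← Ioc_union_Ioi_eq_Ioi zero_le_one]
  refine IntegrableOn.union ?_ ?_
  · have hdom : IntegrableOn (fun t => t - log t) (Ioc 0 1) :=
      (intervalIntegrable_iff_integrableOn_Ioc_of_le zero_le_one).1
        (intervalIntegral.intervalIntegrable_id.sub intervalIntegral.intervalIntegrable_log')
    refine hdom.mono' hmeas.restrict ((ae_restrict_iff' measurableSet_Ioc).2 ?_)
    filter_upwards with t ht
    rw [norm_of_nonneg (neg_log_one_sub_exp_neg_nonneg ht.1.le)]
    exact neg_log_one_sub_exp_neg_le_sub_log ht.1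
  · refine ((integrableOn_exp_neg_Ioi 1).const_mul 2).mono' hmeas.restrict
      ((ae_restrict_iff' measurableSet_Ioi).2 ?_)
    filter_upwards with t ht
    rw [norm_of_nonneg (neg_log_one_sub_exp_neg_nonneg (zero_le_one.trans ht.out.le))]
    exact neg_log_one_sub_exp_neg_le_two_mul_exp_neg ht.out.le

lemma V_eq_of_pos {r : ℝ} (hr : 0 < r) :
    V r = r * exp (-r) / sinh r + -log (1 - exp (-(2 * r))) := by
  have hs : 0 < sinh r := sinh_pos_iff.2 hr
  have hlog : log (sinh r) + log 2 = r + log (1 - exp (-(2 * r))) := by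
    have h2s : sinh r * 2 = exp r * (1 - exp (-(2 * r))) := by
      rw [sinh_eq, mul_sub, ← exp_add]; ring_nf
    rw [← log_mul hs.ne' two_ne_zero, h2s, log_mul (exp_pos r).ne'
      (sub_pos.2 (exp_lt_one_iff.2 (by linarith))).ne', log_exp]
  have hcoth : r * (cosh r / sinh r) = r + r * exp (-r) / sinh r := by
    rw [← cosh_sub_sinh]; field_simp; ring
  rw [V, abs_of_pos hs, hcoth]
  linarith

lemma abs_V_le {r : ℝ} (hr : 0 < r) : |V r| ≤ exp (-r) + -log (1 - exp (-(2 * r))) := by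
  have hs : 0 < sinh r := sinh_pos_iff.2 hr
  have hfirst : r * exp (-r) / sinh r ≤ exp (-r) := by
    rw [div_le_iff₀ hs, mul_comm]
    exact mul_le_mul_of_nonneg_left (self_lt_sinh_iff.2 hr).le (exp_pos _).le
  have hsecond := neg_log_one_sub_exp_neg_nonneg (by positivity : 0 ≤ 2 * r)
  rw [V_eq_of_pos hr, abs_of_nonneg (by positivity)]
  linarith

/-- **Integrability of `V` on `(0, ∞)`**: the constant `a := ∫_0^∞ V` is finite. -/
theorem V_integrableOn_Ioi : IntegrableOn V (Ioi (0 : ℝ)) volume := by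
  have hdom : IntegrableOn (fun r => exp (-r) + -log (1 - exp (-(2 * r)))) (Ioi 0) :=
    (integrableOn_exp_neg_Ioi 0).add <| (integrableOn_Ioi_comp_mul_left_iff _ 0 two_pos).2
      (by rw [mul_zero]; exact integrableOn_neg_log_one_sub_exp_neg)
  have hmeas : AEStronglyMeasurable V volume := by
    unfold V; fun_prop
  refine hdom.mono' hmeas.restrict ((ae_restrict_iff' measurableSet_Ioi).2 ?_)
  filter_upwards with r hr
  exact abs_V_le hr
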